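/- arXiv:2003.12767 — 2 statements merged into one kernel-verified Lean document; each statement's English description precedes it below -/
import Mathlib

section
/- Let I be a nonempty finite index set, let (X_i)_{i∈I} be measurable spaces, let μ be a probability measure on Π_{i∈I} X_i with i-th marginals μ_i, and let (ν_i)_{i∈I} be probability measures on the X_i such that μ is absolutely continuous with respect to ⊗_{i∈I} ν_i. Then the Pythagorean identity D(μ ‖ ⊗_{i∈I} ν_i) = D(μ ‖ ⊗_{i∈I} μ_i) + Σ_{i∈I} D(μ_i ‖ ν_i) holds, where all three quantities are taken in [0,∞]. -/
/-!
Let `m` be the product of the marginals `μᵢ` of `μ`. The density of `m` with respect to `⊗ νᵢ`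
is `x ↦ ∏ᵢ (dμᵢ/dνᵢ)(xᵢ)`, which is positive `μ`-a.e., so `μ ≪ m` and the chain rule for
Radon–Nikodym derivatives gives, `μ`-a.e.,
`log dμ/d(⊗ νᵢ) = log dμ/dm + ∑ᵢ log (dμᵢ/dνᵢ)(xᵢ)`.
Under `μ` the coordinate `xᵢ` has law `μᵢ`, so integrating against `μ` gives the identity.
Integrability is bookkept through `log dμ/dν ≥ -(dμ/dν)⁻¹`, where `(dμ/dν)⁻¹ = dν/dμ` is
`μ`-integrable: as all negative parts are integrable, the left side is integrable exactly when
every term on the right is, and otherwise both sides are `∞`.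
-/

open MeasureTheory
open scoped ENNReal NNReal Classical

/-- The Kullback–Leibler divergence `D(μ‖ν) ∈ [0,∞]`: it equals
`∫ log(dμ/dν) dμ` when `μ ≪ ν` (and this integral is well defined),
and `+∞` otherwise. -/
noncomputable def klDiv {α : Type*} [MeasurableSpace α] (μ ν : Measure α) : ℝ≥0∞ :=
  if μ ≪ ν ∧ Integrable (fun x => Real.log ((μ.rnDeriv ν x).toReal)) μ then
    ENNReal.ofReal (∫ x, Real.log ((μ.rnDeriv ν x).toReal) ∂μ)
  else ⊤

section LowerBounded

variable {α : Type*} [MeasurableSpace α] {μ : Measure α}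

lemma integrable_add_iff_of_neg_le {f g φ ψ : α → ℝ} (hf : AEStronglyMeasurable f μ)
    (hφ : Integrable φ μ) (hψ : Integrable ψ μ) (hfφ : ∀ᵐ x ∂μ, -φ x ≤ f x)
    (hgψ : ∀ᵐ x ∂μ, -ψ x ≤ g x) :
    Integrable (fun x => f x + g x) μ ↔ Integrable f μ ∧ Integrable g μ := by
  have shift : Integrable (fun x => f x + g x) μ ↔ Integrable ((f + φ) + (g + ψ)) μ := by
    rw [show (f + φ) + (g + ψ) = (f + g) + (φ + ψ) by abel]
    exact (integrable_add_iff_integrable_left (hφ.add hψ)).symm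
  rw [shift, integrable_add_iff_of_nonneg (hf.add hφ.aestronglyMeasurable),
    integrable_add_iff_integrable_left hφ, integrable_add_iff_integrable_left hψ]
  · filter_upwards [hfφ] with x hx
    simp only [Pi.zero_apply, Pi.add_apply]
    linarith
  · filter_upwards [hgψ] with x hx
    simp only [Pi.zero_apply, Pi.add_apply]
    linarith

lemma integrable_finsetSum_iff_of_neg_le {ι : Type*} (s : Finset ι) {f φ : ι → α → ℝ}
    (hf : ∀ i ∈ s, AEStronglyMeasurable (f i) μ) (hφ : ∀ i ∈ s, Integrable (φ i) μ)
    (hfφ : ∀ i ∈ s, ∀ᵐ x ∂μ, -φ i x ≤ f i x) :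
    Integrable (fun x => ∑ i ∈ s, f i x) μ ↔ ∀ i ∈ s, Integrable (f i) μ := by
  induction s using Finset.cons_induction with
  | empty => simp
  | cons j s hj ih =>
    simp only [Finset.forall_mem_cons, Finset.sum_cons] at hf hφ hfφ ⊢
    rw [integrable_add_iff_of_neg_le hf.1 hφ.1 (integrable_finsetSum s hφ.2)
      hfφ.1, ih hf.2 hφ.2 hfφ.2]
    filter_upwards [(ae_ball_iff s.countable_toSet).2 hfφ.2] with x hx
    rw [← Finset.sum_neg_distrib]
    exact Finset.sum_le_sum hx

end LowerBounded

section LogLikelihoodRatio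

variable {α : Type*} [MeasurableSpace α] {μ ν : Measure α}

lemma neg_inv_toReal_rnDeriv_le_llr (x : α) : -((μ.rnDeriv ν x).toReal)⁻¹ ≤ llr μ ν x :=
  Real.neg_inv_le_log ENNReal.toReal_nonneg

lemma integrable_inv_toReal_rnDeriv [SigmaFinite μ] [IsFiniteMeasure ν] (hμν : μ ≪ ν) :
    Integrable (fun x => ((μ.rnDeriv ν x).toReal)⁻¹) μ := by
  refine (Measure.integrable_toReal_rnDeriv (μ := ν) (ν := μ)).congr ?_
  filter_upwards [Measure.inv_rnDeriv hμν] with x hx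
  rw [← hx, Pi.inv_apply, ENNReal.toReal_inv]

lemma ae_toReal_rnDeriv_pos [SigmaFinite μ] [SigmaFinite ν] (hμν : μ ≪ ν) :
    ∀ᵐ x ∂μ, 0 < (μ.rnDeriv ν x).toReal := by
  filter_upwards [Measure.rnDeriv_pos hμν, hμν.ae_le (Measure.rnDeriv_ne_top μ ν)] with x h0 htop
  exact ENNReal.toReal_pos h0.ne' htop

lemma integral_llr_nonneg [IsProbabilityMeasure μ] [IsProbabilityMeasure ν] (hμν : μ ≪ ν)
    (h_int : Integrable (llr μ ν) μ) : 0 ≤ ∫ x, llr μ ν x ∂μ := by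
  simpa using InformationTheory.integral_llr_add_sub_measure_univ_nonneg hμν h_int

lemma klDiv_of_integrable (hμν : μ ≪ ν) (h_int : Integrable (llr μ ν) μ) :
    klDiv μ ν = ENNReal.ofReal (∫ x, llr μ ν x ∂μ) :=
  if_pos ⟨hμν, h_int⟩

lemma klDiv_of_not_integrable (h_int : ¬ Integrable (llr μ ν) μ) : klDiv μ ν = ∞ :=
  if_neg fun h => h_int h.2

end LogLikelihoodRatio

lemma absolutelyContinuous_withDensity_of_ae_ne_zero {α : Type*} [MeasurableSpace α]
    {μ ν : Measure α} {f : α → ℝ≥0∞} (hf : Measurable f) (hμν : μ ≪ ν)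
    (hf_ne_zero : ∀ᵐ x ∂μ, f x ≠ 0) : μ ≪ ν.withDensity f := by
  refine Measure.AbsolutelyContinuous.mk fun s hs hνs => ?_
  rw [withDensity_apply _ hs, setLIntegral_eq_zero_iff hs hf] at hνs
  rw [measure_eq_zero_iff_ae_notMem]
  filter_upwards [hμν.ae_le hνs, hf_ne_zero] with x hfs hfx hxs using hfx (hfs hxs)

section ChainRule

variable {α : Type*} [MeasurableSpace α] {ι : Type*} [Fintype ι] {β : ι → Type*}
  [∀ i, MeasurableSpace (β i)] {μ π m : Measure α} {f : ∀ i, α → β i} {ν : ∀ i, Measure (β i)}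

lemma integrable_llr_iff_of_llr_ae_eq [IsFiniteMeasure μ] [IsFiniteMeasure m]
    [∀ i, IsFiniteMeasure (ν i)] (hf : ∀ i, Measurable (f i)) (hμm : μ ≪ m)
    (hν : ∀ i, μ.map (f i) ≪ ν i)
    (hllr : llr μ π =ᵐ[μ] fun x => llr μ m x + ∑ i, llr (μ.map (f i)) (ν i) (f i x)) :
    Integrable (llr μ π) μ ↔
      Integrable (llr μ m) μ ∧ ∀ i, Integrable (llr (μ.map (f i)) (ν i)) (μ.map (f i)) := by
  have integrable_map_iff {i} {g : β i → ℝ} (hg : Measurable g) :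
      Integrable g (μ.map (f i)) ↔ Integrable (fun x => g (f i x)) μ :=
    integrable_map_measure hg.aestronglyMeasurable (hf i).aemeasurable
  have inv_integrable i :
      Integrable (fun x => (((μ.map (f i)).rnDeriv (ν i) (f i x)).toReal)⁻¹) μ :=
    (integrable_map_iff (Measure.measurable_rnDeriv _ _).ennreal_toReal.inv).1
      (integrable_inv_toReal_rnDeriv (hν i))
  have sum_iff := integrable_finsetSum_iff_of_neg_le Finset.univ
    (f := fun i x => llr (μ.map (f i)) (ν i) (f i x))
    (fun i _ => ((measurable_llr _ _).comp (hf i)).aestronglyMeasurable)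
    (fun i _ => inv_integrable i)
    (fun i _ => ae_of_all _ fun x => neg_inv_toReal_rnDeriv_le_llr (f i x))
  simp only [Finset.mem_univ, forall_const] at sum_iff
  rw [integrable_congr hllr]
  refine (integrable_add_iff_of_neg_le (measurable_llr _ _).aestronglyMeasurable
    (integrable_inv_toReal_rnDeriv hμm)
    (integrable_finsetSum Finset.univ fun i _ => inv_integrable i)
    (ae_of_all _ neg_inv_toReal_rnDeriv_le_llr) ?_).trans ?_
  · refine ae_of_all _ fun x => ?_
    rw [← Finset.sum_neg_distrib]
    exact Finset.sum_le_sum fun i _ => neg_inv_toReal_rnDeriv_le_llr (f i x)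
  · rw [sum_iff]
    exact and_congr_right' (forall_congr' fun i => (integrable_map_iff (measurable_llr _ _)).symm)

theorem klDiv_eq_add_sum_of_llr_ae_eq [IsProbabilityMeasure μ] [IsProbabilityMeasure m]
    [∀ i, IsProbabilityMeasure (ν i)] (hf : ∀ i, Measurable (f i)) (hμπ : μ ≪ π) (hμm : μ ≪ m)
    (hν : ∀ i, μ.map (f i) ≪ ν i)
    (hllr : llr μ π =ᵐ[μ] fun x => llr μ m x + ∑ i, llr (μ.map (f i)) (ν i) (f i x)) :
    klDiv μ π = klDiv μ m + ∑ i, klDiv (μ.map (f i)) (ν i) := by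
  have := fun i => Measure.isProbabilityMeasure_map (μ := μ) (hf i).aemeasurable
  have integrable_iff := integrable_llr_iff_of_llr_ae_eq hf hμm hν hllr
  by_cases h_int : Integrable (llr μ π) μ
  · obtain ⟨hH, hB⟩ := integrable_iff.1 h_int
    have integral_eq : ∫ x, llr μ π x ∂μ =
        ∫ x, llr μ m x ∂μ + ∑ i, ∫ y, llr (μ.map (f i)) (ν i) y ∂μ.map (f i) := by
      have hB_comp i : Integrable (fun x => llr (μ.map (f i)) (ν i) (f i x)) μ :=
        (hB i).comp_measurable (hf i)
      rw [integral_congr_ae hllr, integral_add hH (integrable_finsetSum _ fun i _ => hB_comp i),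
        integral_finsetSum _ fun i _ => hB_comp i]
      congr 1
      refine Finset.sum_congr rfl fun i _ => ?_
      rw [integral_map (hf i).aemeasurable (measurable_llr _ _).aestronglyMeasurable]
    rw [klDiv_of_integrable hμπ h_int, klDiv_of_integrable hμm hH, integral_eq,
      ENNReal.ofReal_add (integral_llr_nonneg hμm hH)
        (Finset.sum_nonneg fun i _ => integral_llr_nonneg (hν i) (hB i)),
      ENNReal.ofReal_sum_of_nonneg fun i _ => integral_llr_nonneg (hν i) (hB i)]
    exact congrArg _ (Finset.sum_congr rfl fun i _ => (klDiv_of_integrable (hν i) (hB i)).symm)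
  · rw [klDiv_of_not_integrable h_int]
    rw [integrable_iff, not_and_or, not_forall] at h_int
    rcases h_int with hH | ⟨i, hi⟩
    · rw [klDiv_of_not_integrable hH, top_add]
    · rw [ENNReal.sum_eq_top.2 ⟨i, Finset.mem_univ i, klDiv_of_not_integrable hi⟩, add_top]

end ChainRule

section Pi

open ProbabilityTheory

variable {ι : Type*} [Fintype ι] {E : ι → Type*} [∀ i, MeasurableSpace (E i)]

lemma lintegral_fintype_prod_eq_prod (ν : ∀ i, Measure (E i)) [∀ i, IsProbabilityMeasure (ν i)]
    {f : ∀ i, E i → ℝ≥0∞} (hf : ∀ i, Measurable (f i)) :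
    ∫⁻ x, ∏ i, f i (x i) ∂Measure.pi ν = ∏ i, ∫⁻ y, f i y ∂ν i := by
  rw [lintegral_prod_eq_prod_lintegral_of_indepFun _ _ (iIndepFun_pi fun i => (hf i).aemeasurable)
    fun i => (hf i).comp (measurable_pi_apply i)]
  exact Finset.prod_congr rfl fun i _ => (measurePreserving_eval ν i).lintegral_comp (hf i)

lemma pi_eq_withDensity_prod (ν μ : ∀ i, Measure (E i)) [∀ i, IsProbabilityMeasure (ν i)]
    [∀ i, SigmaFinite (μ i)] {f : ∀ i, E i → ℝ≥0∞} (hf : ∀ i, Measurable (f i))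
    (hμ : ∀ i, μ i = (ν i).withDensity (f i)) :
    Measure.pi μ = (Measure.pi ν).withDensity fun x => ∏ i, f i (x i) := by
  refine Measure.pi_eq fun s hs => ?_
  have indicator_prod : (Set.univ.pi s).indicator (fun x => ∏ i, f i (x i))
      = fun x => ∏ i, (s i).indicator (f i) (x i) := by
    ext x
    simp [Set.indicator_apply, Finset.prod_ite_zero]
  rw [withDensity_apply _ (MeasurableSet.univ_pi hs),
    ← lintegral_indicator (MeasurableSet.univ_pi hs), indicator_prod,
    lintegral_fintype_prod_eq_prod ν fun i => (hf i).indicator (hs i)]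
  exact Finset.prod_congr rfl fun i _ => by
    rw [lintegral_indicator (hs i), hμ i, withDensity_apply _ (hs i)]

end Pi

section Marginals

variable {I : Type*} [Fintype I] {X : I → Type*} [∀ i, MeasurableSpace (X i)]
  {μ : Measure (∀ i, X i)} {ν : ∀ i, Measure (X i)} [∀ i, IsProbabilityMeasure (ν i)]

lemma absolutelyContinuous_map_eval (hac : μ ≪ Measure.pi ν) (i : I) :
    μ.map (fun x => x i) ≪ ν i :=
  (measurePreserving_eval ν i).map_eq ▸ hac.map (measurable_pi_apply i)

variable [IsProbabilityMeasure μ]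

instance isProbabilityMeasure_map_eval (i : I) : IsProbabilityMeasure (μ.map fun x => x i) :=
  Measure.isProbabilityMeasure_map (measurable_pi_apply i).aemeasurable

lemma pi_map_eval_eq_withDensity (hac : μ ≪ Measure.pi ν) :
    Measure.pi (fun i => μ.map fun x => x i) =
      (Measure.pi ν).withDensity fun x => ∏ i, (μ.map fun x => x i).rnDeriv (ν i) (x i) :=
  pi_eq_withDensity_prod ν _ (fun _ => Measure.measurable_rnDeriv _ _) fun i =>
    (Measure.withDensity_rnDeriv_eq _ _ (absolutelyContinuous_map_eval hac i)).symm

lemma ae_toReal_rnDeriv_map_eval_pos (hac : μ ≪ Measure.pi ν) :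
    ∀ᵐ x ∂μ, ∀ i, 0 < ((μ.map fun x => x i).rnDeriv (ν i) (x i)).toReal :=
  ae_all_iff.2 fun i => ae_of_ae_map (measurable_pi_apply i).aemeasurable
    (ae_toReal_rnDeriv_pos (absolutelyContinuous_map_eval hac i))

lemma absolutelyContinuous_pi_map_eval (hac : μ ≪ Measure.pi ν) :
    μ ≪ Measure.pi (fun i => μ.map fun x => x i) := by
  rw [pi_map_eval_eq_withDensity hac]
  refine absolutelyContinuous_withDensity_of_ae_ne_zero (by fun_prop) hac ?_
  filter_upwards [ae_toReal_rnDeriv_map_eval_pos hac] with x hx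
  exact Finset.prod_ne_zero_iff.2 fun i _ => (ENNReal.toReal_pos_iff.1 (hx i)).1.ne'

lemma llr_pi_ae_eq (hac : μ ≪ Measure.pi ν) :
    llr μ (Measure.pi ν) =ᵐ[μ] fun x => llr μ (Measure.pi fun i => μ.map fun x => x i) x +
      ∑ i, llr (μ.map fun x => x i) (ν i) (x i) := by
  have hμm := absolutelyContinuous_pi_map_eval hac
  have density_eq := Measure.rnDeriv_withDensity (Measure.pi ν)
    (f := fun x => ∏ i, (μ.map fun x => x i).rnDeriv (ν i) (x i)) (by fun_prop)
  rw [← pi_map_eval_eq_withDensity hac] at density_eq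
  filter_upwards [hac.ae_le (Measure.rnDeriv_mul_rnDeriv hμm), hac.ae_le density_eq,
    ae_toReal_rnDeriv_pos hμm, ae_toReal_rnDeriv_map_eval_pos hac]
    with x hchain hdensity hpos hpos_i
  simp only [llr, ← hchain, Pi.mul_apply, hdensity, ENNReal.toReal_mul, ENNReal.toReal_prod]
  rw [Real.log_mul hpos.ne' (Finset.prod_ne_zero_iff.2 fun i _ => (hpos_i i).ne'),
    Real.log_prod fun i _ => (hpos_i i).ne']

end Marginals

theorem klDiv_product_pythagorean_general
    {I : Type*} [Fintype I] {X : I → Type*}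
    [∀ i, MeasurableSpace (X i)]
    (μ : Measure (∀ i, X i)) [IsProbabilityMeasure μ]
    (ν : ∀ i, Measure (X i)) [∀ i, IsProbabilityMeasure (ν i)]
    (hac : μ ≪ Measure.pi ν) :
    klDiv μ (Measure.pi ν) =
      klDiv μ (Measure.pi (fun i => Measure.map (fun x => x i) μ)) +
        ∑ i, klDiv (Measure.map (fun x => x i) μ) (ν i) :=
  klDiv_eq_add_sum_of_llr_ae_eq measurable_pi_apply hac (absolutelyContinuous_pi_map_eval hac)
    (absolutelyContinuous_map_eval hac) (llr_pi_ae_eq hac)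

/-- Pythagorean identity for the KL divergence to a product measure:
`D(μ ‖ ⊗ᵢ νᵢ) = D(μ ‖ ⊗ᵢ μᵢ) + Σᵢ D(μᵢ ‖ νᵢ)`, where `μᵢ` are the marginals of `μ`. -/
theorem klDiv_product_pythagorean
    {I : Type*} [Fintype I] [Nonempty I] {X : I → Type*}
    [∀ i, MeasurableSpace (X i)]
    (μ : Measure (∀ i, X i)) [IsProbabilityMeasure μ]
    (ν : ∀ i, Measure (X i)) [∀ i, IsProbabilityMeasure (ν i)]
    (hac : μ ≪ Measure.pi ν) :
    klDiv μ (Measure.pi ν) =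
      klDiv μ (Measure.pi (fun i => Measure.map (fun x => x i) μ)) +
        ∑ i, klDiv (Measure.map (fun x => x i) μ) (ν i) :=
  klDiv_product_pythagorean_general μ ν hac
end

section
/- Let (X, 𝒜, λ₀) be a σ-finite measure space, let p : X → ℝ≥0 be measurable with ∫ p dλ₀ = 1, let r ∈ [0,1], and let p^D : X → [0,1] be measurable. Consider the probability measure on Option X × Bool (state paired with a detection indicator) under which: the state is none with probability 1−r and then the indicator is false with probability 1; and the state lies in some(A) with probability r·∫_A p dλ₀ for measurable A ⊆ X, and conditionally on state some x the indicator is true with probability p^D(x) and false with probability 1−p^D(x). Then the marginal probability that the indicator is false equals 1 − r·∫ p^D p dλ₀; and if this quantity is positive, then conditionally on the indicator being false, the probability that the state is not none equals r·∫ (1−p^D) p dλ₀ / (1 − r·∫ p^D p dλ₀), and for every measurable A ⊆ X the conditional probability that the state lies in some(A) equals r·∫_A (1−p^D) p dλ₀ / (1 − r·∫ p^D p dλ₀). -/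
open MeasureTheory
open scoped ENNReal NNReal

/-! Only existing objects can be detected, so the misdetection event splits into the missing
object (mass `1 - r`) and the missed existing one (mass `r ∫ (1 - p^D) p = r (1 - ∫ p^D p)`,
since `∫ p = 1`); the conditional quantities are ratios of such masses. -/

/-- Measurable-space structure on `Option X`, via the identification
`Option X ≃ X ⊕ PUnit`. -/
instance optionMeasurableSpace {X : Type*} [MeasurableSpace X] :
    MeasurableSpace (Option X) :=
  MeasurableSpace.comap (fun o : Option X => o.elim (Sum.inr ()) Sum.inl : Option X → X ⊕ Unit) inferInstance

section OptionMeasurable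

variable {X : Type*} [MeasurableSpace X]

theorem measurable_option_some : Measurable (Option.some : X → Option X) := by
  rintro _ ⟨s, hs, rfl⟩
  exact measurable_inl hs

theorem MeasurableSet.image_option_some {A : Set X} (hA : MeasurableSet A) :
    MeasurableSet (Option.some '' A) := by
  have hpre : Option.some '' A =
      (fun o : Option X => o.elim (Sum.inr ()) Sum.inl) ⁻¹' (Sum.inl '' A) := by
    ext o; cases o <;> simp
  rw [hpre]
  exact comap_measurable _ hA.inl_image

end OptionMeasurable

theorem ENNReal.one_sub_add_mul_one_sub {a b : ℝ≥0∞} (ha : a ≤ 1) (hb : b ≤ 1) :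
    (1 - a) + a * (1 - b) = 1 - a * b := by
  have hab : a * b ≤ a := mul_le_of_le_one_right' hb
  rw [ENNReal.mul_sub fun _ _ => (ha.trans_lt ENNReal.one_lt_top).ne, mul_one,
    tsub_add_tsub_cancel ha hab]

theorem lintegral_one_sub_mul {X : Type*} [MeasurableSpace X] {μ : Measure X}
    {q f : X → ℝ≥0∞} (hq : Measurable q) (hf : Measurable f) (hq1 : ∀ x, q x ≤ 1)
    (hfin : ∫⁻ x, f x ∂μ ≠ ∞) :
    ∫⁻ x, (1 - q x) * f x ∂μ = ∫⁻ x, f x ∂μ - ∫⁻ x, q x * f x ∂μ := by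
  have hqf_le : ∫⁻ x, q x * f x ∂μ ≤ ∫⁻ x, f x ∂μ :=
    lintegral_mono fun x => mul_le_of_le_one_left' (hq1 x)
  refine ENNReal.eq_sub_of_add_eq (ne_top_of_le_ne_top hfin hqf_le) ?_
  rw [← lintegral_add_right _ (g := fun x => q x * f x) (hq.mul hf)]
  congr 1 with x
  rw [← add_mul, tsub_add_cancel_of_le (hq1 x), one_mul]

section LabelledBernoulli

variable {X : Type*} [MeasurableSpace X]

noncomputable def labelledBernoulli (c : ℝ≥0) (μD μM : Measure X) :
    Measure (Option X × Bool) :=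
  c • Measure.dirac ((none : Option X), false)
    + Measure.map (fun x => ((some x : Option X), true)) μD
    + Measure.map (fun x => ((some x : Option X), false)) μM

theorem labelledBernoulli_apply (c : ℝ≥0) (μD μM : Measure X) {S : Set (Option X × Bool)}
    (hS : MeasurableSet S) :
    labelledBernoulli c μD μM S =
      c * S.indicator 1 (none, false) + μD {x | (some x, true) ∈ S}
        + μM {x | (some x, false) ∈ S} := by
  rw [labelledBernoulli, Measure.add_apply, Measure.add_apply, Measure.smul_apply,
    Measure.map_apply (measurable_option_some.prodMk measurable_const) hS,
    Measure.map_apply (measurable_option_some.prodMk measurable_const) hS,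
    Measure.dirac_apply' _ hS, ENNReal.smul_def, smul_eq_mul]
  rfl

theorem labelledBernoulli_snd_eq_false (c : ℝ≥0) (μD μM : Measure X) :
    labelledBernoulli c μD μM {ω | ω.2 = false} = c + μM Set.univ := by
  rw [labelledBernoulli_apply (S := {ω | ω.2 = false}) c μD μM
    (measurable_snd (measurableSet_singleton false))]
  simp

theorem labelledBernoulli_some_mem_snd_eq_false (c : ℝ≥0) (μD μM : Measure X) {A : Set X}
    (hA : MeasurableSet A) :
    labelledBernoulli c μD μM {ω | (∃ x ∈ A, ω.1 = some x) ∧ ω.2 = false} = μM A := by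
  have hS : {ω : Option X × Bool | (∃ x ∈ A, ω.1 = some x) ∧ ω.2 = false} =
      Prod.fst ⁻¹' (Option.some '' A) ∩ Prod.snd ⁻¹' {false} := by
    ext ⟨o, b⟩
    simp only [Set.mem_ofPred_eq, Set.mem_inter_iff, Set.mem_preimage, Set.mem_image,
      Set.mem_singleton_iff, eq_comm (a := o)]
  have hS_meas :
      MeasurableSet {ω : Option X × Bool | (∃ x ∈ A, ω.1 = some x) ∧ ω.2 = false} := by
    rw [hS]
    exact (measurable_fst hA.image_option_some).inter
      (measurable_snd (measurableSet_singleton false))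
  rw [labelledBernoulli_apply c μD μM hS_meas]
  simp

theorem labelledBernoulli_ne_none_snd_eq_false (c : ℝ≥0) (μD μM : Measure X) :
    labelledBernoulli c μD μM {ω | ω.1 ≠ none ∧ ω.2 = false} = μM Set.univ := by
  rw [← labelledBernoulli_some_mem_snd_eq_false c μD μM MeasurableSet.univ]
  congr 2 with ⟨o, b⟩
  simp [Option.ne_none_iff_exists']

end LabelledBernoulli

theorem bernoulli_misdetection_update_general {X : Type*} [MeasurableSpace X]
    (lam0 : Measure X)
    (p : X → ℝ≥0) (hp : Measurable p) (hp1 : ∫⁻ x, (p x : ℝ≥0∞) ∂lam0 = 1)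
    (r : ℝ≥0) (hr : r ≤ 1)
    (pD : X → ℝ≥0) (hpD : Measurable pD) (hpD1 : ∀ x, pD x ≤ 1)
    (κ : Measure (Option X × Bool))
    (hκ : κ = ((1 - r : ℝ≥0) • Measure.dirac ((none : Option X), false))
        + Measure.map (fun x => ((some x : Option X), true))
            (lam0.withDensity (fun x => (r : ℝ≥0∞) * (p x : ℝ≥0∞) * (pD x : ℝ≥0∞)))
        + Measure.map (fun x => ((some x : Option X), false))
            (lam0.withDensity
              (fun x => (r : ℝ≥0∞) * (p x : ℝ≥0∞) * (1 - (pD x : ℝ≥0∞))))) :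
    κ {ω | ω.2 = false} = 1 - (r : ℝ≥0∞) * ∫⁻ x, (pD x : ℝ≥0∞) * (p x : ℝ≥0∞) ∂lam0 ∧
      (0 < 1 - (r : ℝ≥0∞) * ∫⁻ x, (pD x : ℝ≥0∞) * (p x : ℝ≥0∞) ∂lam0 →
        (κ {ω | ω.1 ≠ none ∧ ω.2 = false} / κ {ω | ω.2 = false} =
            (r : ℝ≥0∞) * (∫⁻ x, (1 - (pD x : ℝ≥0∞)) * (p x : ℝ≥0∞) ∂lam0) /
              (1 - (r : ℝ≥0∞) * ∫⁻ x, (pD x : ℝ≥0∞) * (p x : ℝ≥0∞) ∂lam0)) ∧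
          ∀ A : Set X, MeasurableSet A →
            κ {ω | (∃ x ∈ A, ω.1 = some x) ∧ ω.2 = false} / κ {ω | ω.2 = false} =
              (r : ℝ≥0∞) * (∫⁻ x in A, (1 - (pD x : ℝ≥0∞)) * (p x : ℝ≥0∞) ∂lam0) /
                (1 - (r : ℝ≥0∞) * ∫⁻ x, (pD x : ℝ≥0∞) * (p x : ℝ≥0∞) ∂lam0)) := by
  replace hκ : κ = labelledBernoulli (X := X) (1 - r) _ _ := hκ
  have hmissed (A : Set X) (hA : MeasurableSet A) :
      lam0.withDensity (fun x => (r : ℝ≥0∞) * p x * (1 - pD x)) A =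
        r * ∫⁻ x in A, (1 - (pD x : ℝ≥0∞)) * p x ∂lam0 := by
    simp_rw [withDensity_apply _ hA, mul_assoc, mul_comm (p _ : ℝ≥0∞)]
    exact lintegral_const_mul' _ _ ENNReal.coe_ne_top
  have hdetect_le : ∫⁻ x, (pD x : ℝ≥0∞) * p x ∂lam0 ≤ 1 :=
    hp1 ▸ lintegral_mono fun x => mul_le_of_le_one_left' (ENNReal.coe_le_one_iff.2 (hpD1 x))
  have hmisdetect : κ {ω | ω.2 = false} =
      1 - (r : ℝ≥0∞) * ∫⁻ x, (pD x : ℝ≥0∞) * p x ∂lam0 := by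
    rw [hκ, labelledBernoulli_snd_eq_false, hmissed _ MeasurableSet.univ, setLIntegral_univ,
      lintegral_one_sub_mul hpD.coe_nnreal_ennreal hp.coe_nnreal_ennreal
        (fun x => ENNReal.coe_le_one_iff.2 (hpD1 x)) (hp1 ▸ ENNReal.one_ne_top),
      hp1, ENNReal.coe_sub, ENNReal.coe_one]
    exact ENNReal.one_sub_add_mul_one_sub (ENNReal.coe_le_one_iff.2 hr) hdetect_le
  refine ⟨hmisdetect, fun _ => ⟨?_, fun A hA => ?_⟩⟩
  · rw [hmisdetect, hκ, labelledBernoulli_ne_none_snd_eq_false, hmissed _ MeasurableSet.univ,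
      setLIntegral_univ]
  · rw [hmisdetect, hκ, labelledBernoulli_some_mem_snd_eq_false _ _ _ hA, hmissed _ hA]

/-- Misdetection update of a Bernoulli component.  A Bernoulli component with
existence probability `r` and density `p` (w.r.t. `λ₀`), detected with
state-dependent probability `p^D`, is modeled as the law `κ` on
`Option X × Bool` (state, detection indicator).  Then the probability of
misdetection (indicator `false`) is `1 − r⟨p, p^D⟩`; and, when this is positive,
conditionally on misdetection the existence probability is
`r⟨p, 1−p^D⟩ / (1 − r⟨p, p^D⟩)` and the state distribution on any measurable `A`
is `r∫_A (1−p^D) p dλ₀ / (1 − r⟨p, p^D⟩)`. -/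
theorem bernoulli_misdetection_update {X : Type*} [MeasurableSpace X]
    (lam0 : Measure X) [SigmaFinite lam0]
    (p : X → ℝ≥0) (hp : Measurable p) (hp1 : ∫⁻ x, (p x : ℝ≥0∞) ∂lam0 = 1)
    (r : ℝ≥0) (hr : r ≤ 1)
    (pD : X → ℝ≥0) (hpD : Measurable pD) (hpD1 : ∀ x, pD x ≤ 1)
    (κ : Measure (Option X × Bool))
    (hκ : κ = ((1 - r : ℝ≥0) • Measure.dirac ((none : Option X), false))
        + Measure.map (fun x => ((some x : Option X), true))
            (lam0.withDensity (fun x => (r : ℝ≥0∞) * (p x : ℝ≥0∞) * (pD x : ℝ≥0∞)))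
        + Measure.map (fun x => ((some x : Option X), false))
            (lam0.withDensity
              (fun x => (r : ℝ≥0∞) * (p x : ℝ≥0∞) * (1 - (pD x : ℝ≥0∞))))) :
    κ {ω | ω.2 = false} = 1 - (r : ℝ≥0∞) * ∫⁻ x, (pD x : ℝ≥0∞) * (p x : ℝ≥0∞) ∂lam0 ∧
      (0 < 1 - (r : ℝ≥0∞) * ∫⁻ x, (pD x : ℝ≥0∞) * (p x : ℝ≥0∞) ∂lam0 →
        (κ {ω | ω.1 ≠ none ∧ ω.2 = false} / κ {ω | ω.2 = false} =
            (r : ℝ≥0∞) * (∫⁻ x, (1 - (pD x : ℝ≥0∞)) * (p x : ℝ≥0∞) ∂lam0) /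
              (1 - (r : ℝ≥0∞) * ∫⁻ x, (pD x : ℝ≥0∞) * (p x : ℝ≥0∞) ∂lam0)) ∧
          ∀ A : Set X, MeasurableSet A →
            κ {ω | (∃ x ∈ A, ω.1 = some x) ∧ ω.2 = false} / κ {ω | ω.2 = false} =
              (r : ℝ≥0∞) * (∫⁻ x in A, (1 - (pD x : ℝ≥0∞)) * (p x : ℝ≥0∞) ∂lam0) /
                (1 - (r : ℝ≥0∞) * ∫⁻ x, (pD x : ℝ≥0∞) * (p x : ℝ≥0∞) ∂lam0)) :=
  bernoulli_misdetection_update_general lam0 p hp hp1 r hr pD hpD hpD1 κ hκ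
end
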